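/- arXiv:2204.11395 — 2 statements merged into one kernel-verified Lean document; each statement's English description precedes it below -/
import Mathlib

section
/- Let A be an associative algebra over ℚ containing elements x₃, x₅, x₇, x₉, x₁₁, x₁₃ whose commutators satisfy [x₃,x₅] = x₇, [x₃,x₇] = 2x₉, [x₃,x₉] = −3x₁₁, [x₅,x₁₁] = −x₁₃, [x₇,x₉] = −3x₁₃, and all other commutators among the six elements equal to zero. Then the element Q = x₉² − 3x₃x₁₃ + 3x₇x₁₁ commutes with each of the six elements x₃, x₅, x₇, x₉, x₁₁, x₁₃. -/
set_option maxRecDepth 10000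


/-- In an associative ℚ-algebra with elements satisfying the relations of the nilpotent
Lie algebra n_{6,19} (the nilradical of the Borel subalgebra of G₂), the quadratic
Casimir `Q = x₉² − 3x₃x₁₃ + 3x₇x₁₁` commutes with each of the six elements. -/
theorem casimir_n619_commutes {A : Type*} [Ring A] [Algebra ℚ A]
    (x₃ x₅ x₇ x₉ x₁₁ x₁₃ : A)
    (h35 : x₃ * x₅ - x₅ * x₃ = x₇)
    (h37 : x₃ * x₇ - x₇ * x₃ = 2 * x₉)
    (h39 : x₃ * x₉ - x₉ * x₃ = -(3 * x₁₁))
    (h511 : x₅ * x₁₁ - x₁₁ * x₅ = -x₁₃)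
    (h79 : x₇ * x₉ - x₉ * x₇ = -(3 * x₁₃))
    (h311 : x₃ * x₁₁ - x₁₁ * x₃ = 0) (h313 : x₃ * x₁₃ - x₁₃ * x₃ = 0)
    (h57 : x₅ * x₇ - x₇ * x₅ = 0) (h59 : x₅ * x₉ - x₉ * x₅ = 0)
    (h513 : x₅ * x₁₃ - x₁₃ * x₅ = 0)
    (h711 : x₇ * x₁₁ - x₁₁ * x₇ = 0) (h713 : x₇ * x₁₃ - x₁₃ * x₇ = 0)
    (h911 : x₉ * x₁₁ - x₁₁ * x₉ = 0) (h913 : x₉ * x₁₃ - x₁₃ * x₉ = 0)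
    (h1113 : x₁₁ * x₁₃ - x₁₃ * x₁₁ = 0) :
    ∀ x ∈ ({x₃, x₅, x₇, x₉, x₁₁, x₁₃} : Set A),
      (x₉ * x₉ - 3 * (x₃ * x₁₃) + 3 * (x₇ * x₁₁)) * x =
        x * (x₉ * x₉ - 3 * (x₃ * x₁₃) + 3 * (x₇ * x₁₁)) := by
  have key : x₉ * x₉ - 3 * (x₃ * x₁₃) + 3 * (x₇ * x₁₁)
      = x₉ * x₉ - (x₃*x₁₃ + x₃*x₁₃ + x₃*x₁₃) + (x₇*x₁₁ + x₇*x₁₁ + x₇*x₁₁) := by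
    noncomm_ring
  rw [key]
  have s35 : x₅*x₃ = x₃*x₅ - x₇ := by
    have h' := h35; rw [sub_eq_iff_eq_add] at h'; rw [h']; first | noncomm_ring | abel
  have g35 : ∀ y : A, x₅*(x₃*y) = x₃*(x₅*y) - x₇*y := by
    intro y
    have h' := congrArg (· * y) h35
    simp only [sub_mul, neg_mul, zero_mul, mul_assoc] at h'
    rw [sub_eq_iff_eq_add] at h'
    rw [h']; first | noncomm_ring | abel
  have s37 : x₇*x₃ = x₃*x₇ - (x₉+x₉) := by
    have h' := h37; rw [sub_eq_iff_eq_add] at h'; rw [h']; first | noncomm_ring | abel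
  have g37 : ∀ y : A, x₇*(x₃*y) = x₃*(x₇*y) - (x₉*y+x₉*y) := by
    intro y
    have h' := congrArg (· * y) h37
    simp only [sub_mul, neg_mul, zero_mul, mul_assoc] at h'
    rw [sub_eq_iff_eq_add] at h'
    rw [h']; first | noncomm_ring | abel
  have s39 : x₉*x₃ = x₃*x₉ + (x₁₁+x₁₁+x₁₁) := by
    have h' := h39; rw [sub_eq_iff_eq_add] at h'; rw [h']; first | noncomm_ring | abel
  have g39 : ∀ y : A, x₉*(x₃*y) = x₃*(x₉*y) + (x₁₁*y+x₁₁*y+x₁₁*y) := by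
    intro y
    have h' := congrArg (· * y) h39
    simp only [sub_mul, neg_mul, zero_mul, mul_assoc] at h'
    rw [sub_eq_iff_eq_add] at h'
    rw [h']; first | noncomm_ring | abel
  have s511 : x₁₁*x₅ = x₅*x₁₁ + x₁₃ := by
    have h' := h511; rw [sub_eq_iff_eq_add] at h'; rw [h']; first | noncomm_ring | abel
  have g511 : ∀ y : A, x₁₁*(x₅*y) = x₅*(x₁₁*y) + x₁₃*y := by
    intro y
    have h' := congrArg (· * y) h511
    simp only [sub_mul, neg_mul, zero_mul, mul_assoc] at h'
    rw [sub_eq_iff_eq_add] at h'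
    rw [h']; first | noncomm_ring | abel
  have s79 : x₉*x₇ = x₇*x₉ + (x₁₃+x₁₃+x₁₃) := by
    have h' := h79; rw [sub_eq_iff_eq_add] at h'; rw [h']; first | noncomm_ring | abel
  have g79 : ∀ y : A, x₉*(x₇*y) = x₇*(x₉*y) + (x₁₃*y+x₁₃*y+x₁₃*y) := by
    intro y
    have h' := congrArg (· * y) h79
    simp only [sub_mul, neg_mul, zero_mul, mul_assoc] at h'
    rw [sub_eq_iff_eq_add] at h'
    rw [h']; first | noncomm_ring | abel
  have s311 : x₁₁*x₃ = x₃*x₁₁  := by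
    have h' := h311; rw [sub_eq_iff_eq_add] at h'; rw [h']; first | noncomm_ring | abel
  have g311 : ∀ y : A, x₁₁*(x₃*y) = x₃*(x₁₁*y)  := by
    intro y
    have h' := congrArg (· * y) h311
    simp only [sub_mul, neg_mul, zero_mul, mul_assoc] at h'
    rw [sub_eq_iff_eq_add] at h'
    rw [h']; first | noncomm_ring | abel
  have s313 : x₁₃*x₃ = x₃*x₁₃  := by
    have h' := h313; rw [sub_eq_iff_eq_add] at h'; rw [h']; first | noncomm_ring | abel
  have g313 : ∀ y : A, x₁₃*(x₃*y) = x₃*(x₁₃*y)  := by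
    intro y
    have h' := congrArg (· * y) h313
    simp only [sub_mul, neg_mul, zero_mul, mul_assoc] at h'
    rw [sub_eq_iff_eq_add] at h'
    rw [h']; first | noncomm_ring | abel
  have s57 : x₇*x₅ = x₅*x₇  := by
    have h' := h57; rw [sub_eq_iff_eq_add] at h'; rw [h']; first | noncomm_ring | abel
  have g57 : ∀ y : A, x₇*(x₅*y) = x₅*(x₇*y)  := by
    intro y
    have h' := congrArg (· * y) h57
    simp only [sub_mul, neg_mul, zero_mul, mul_assoc] at h'
    rw [sub_eq_iff_eq_add] at h'
    rw [h']; first | noncomm_ring | abel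
  have s59 : x₉*x₅ = x₅*x₉  := by
    have h' := h59; rw [sub_eq_iff_eq_add] at h'; rw [h']; first | noncomm_ring | abel
  have g59 : ∀ y : A, x₉*(x₅*y) = x₅*(x₉*y)  := by
    intro y
    have h' := congrArg (· * y) h59
    simp only [sub_mul, neg_mul, zero_mul, mul_assoc] at h'
    rw [sub_eq_iff_eq_add] at h'
    rw [h']; first | noncomm_ring | abel
  have s513 : x₁₃*x₅ = x₅*x₁₃  := by
    have h' := h513; rw [sub_eq_iff_eq_add] at h'; rw [h']; first | noncomm_ring | abel
  have g513 : ∀ y : A, x₁₃*(x₅*y) = x₅*(x₁₃*y)  := by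
    intro y
    have h' := congrArg (· * y) h513
    simp only [sub_mul, neg_mul, zero_mul, mul_assoc] at h'
    rw [sub_eq_iff_eq_add] at h'
    rw [h']; first | noncomm_ring | abel
  have s711 : x₁₁*x₇ = x₇*x₁₁  := by
    have h' := h711; rw [sub_eq_iff_eq_add] at h'; rw [h']; first | noncomm_ring | abel
  have g711 : ∀ y : A, x₁₁*(x₇*y) = x₇*(x₁₁*y)  := by
    intro y
    have h' := congrArg (· * y) h711
    simp only [sub_mul, neg_mul, zero_mul, mul_assoc] at h'
    rw [sub_eq_iff_eq_add] at h'
    rw [h']; first | noncomm_ring | abel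
  have s713 : x₁₃*x₇ = x₇*x₁₃  := by
    have h' := h713; rw [sub_eq_iff_eq_add] at h'; rw [h']; first | noncomm_ring | abel
  have g713 : ∀ y : A, x₁₃*(x₇*y) = x₇*(x₁₃*y)  := by
    intro y
    have h' := congrArg (· * y) h713
    simp only [sub_mul, neg_mul, zero_mul, mul_assoc] at h'
    rw [sub_eq_iff_eq_add] at h'
    rw [h']; first | noncomm_ring | abel
  have s911 : x₁₁*x₉ = x₉*x₁₁  := by
    have h' := h911; rw [sub_eq_iff_eq_add] at h'; rw [h']; first | noncomm_ring | abel
  have g911 : ∀ y : A, x₁₁*(x₉*y) = x₉*(x₁₁*y)  := by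
    intro y
    have h' := congrArg (· * y) h911
    simp only [sub_mul, neg_mul, zero_mul, mul_assoc] at h'
    rw [sub_eq_iff_eq_add] at h'
    rw [h']; first | noncomm_ring | abel
  have s913 : x₁₃*x₉ = x₉*x₁₃  := by
    have h' := h913; rw [sub_eq_iff_eq_add] at h'; rw [h']; first | noncomm_ring | abel
  have g913 : ∀ y : A, x₁₃*(x₉*y) = x₉*(x₁₃*y)  := by
    intro y
    have h' := congrArg (· * y) h913
    simp only [sub_mul, neg_mul, zero_mul, mul_assoc] at h'
    rw [sub_eq_iff_eq_add] at h'
    rw [h']; first | noncomm_ring | abel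
  have s1113 : x₁₃*x₁₁ = x₁₁*x₁₃  := by
    have h' := h1113; rw [sub_eq_iff_eq_add] at h'; rw [h']; first | noncomm_ring | abel
  have g1113 : ∀ y : A, x₁₃*(x₁₁*y) = x₁₁*(x₁₃*y)  := by
    intro y
    have h' := congrArg (· * y) h1113
    simp only [sub_mul, neg_mul, zero_mul, mul_assoc] at h'
    rw [sub_eq_iff_eq_add] at h'
    rw [h']; first | noncomm_ring | abel
  intro x hx
  simp only [Set.mem_insert_iff, Set.mem_singleton_iff] at hx
  rcases hx with rfl | rfl | rfl | rfl | rfl | rfl <;>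
    · simp only [mul_assoc, mul_add, add_mul, mul_sub, sub_mul,
        s35, s37, s39, s511, s79, s311, s313, s57, s59, s513, s711, s713, s911, s913, s1113,
        g35, g37, g39, g511, g79, g311, g313, g57, g59, g513, g711, g713, g911, g913, g1113]
      try first | noncomm_ring | abel
end

section
/- In the universal enveloping algebra of sl(3,ℂ) (with generators the elementary matrices E_{ij}, 1 ≤ i,j ≤ 3, i ≠ j, together with H₁ = E₁₁−E₂₂ and H₂ = E₂₂−E₃₃, satisfying [E_{ij},E_{kl}] = δ_{jk}E_{il} − δ_{li}E_{kj}), the elements B₁ = E₁₃, B₂ = 3E₁₂E₂₃ + (H₁−H₂)E₁₃, and C₁ = E₃₂E₁₃² − E₂₃E₁₂² + H₂E₁₂E₁₃ satisfy the commutation relation [B₂, C₁] = 3 B₁ C₁. -/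
open LieAlgebra.SpecialLinear

attribute [local instance] LieRing.ofAssociativeRing

/-- E₁₂ as an element of sl(3,ℂ). -/
noncomputable def slE₁₂ : sl (Fin 3) ℂ := single 0 1 (by decide) (1 : ℂ)

/-- E₂₃ as an element of sl(3,ℂ). -/
noncomputable def slE₂₃ : sl (Fin 3) ℂ := single 1 2 (by decide) (1 : ℂ)

/-- E₁₃ as an element of sl(3,ℂ). -/
noncomputable def slE₁₃ : sl (Fin 3) ℂ := single 0 2 (by decide) (1 : ℂ)

/-- E₂₃' := E₃₂ as an element of sl(3,ℂ). -/
noncomputable def slE₃₂ : sl (Fin 3) ℂ := single 2 1 (by decide) (1 : ℂ)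

/-- H₁ = E₁₁ − E₂₂ as an element of sl(3,ℂ). -/
noncomputable def slH₁ : sl (Fin 3) ℂ :=
  ⟨Matrix.single 0 0 1 - Matrix.single 1 1 1, by
    show _ ∈ LinearMap.ker (Matrix.traceLinearMap (Fin 3) ℂ ℂ)
    simp⟩

/-- H₂ = E₂₂ − E₃₃ as an element of sl(3,ℂ). -/
noncomputable def slH₂ : sl (Fin 3) ℂ :=
  ⟨Matrix.single 1 1 1 - Matrix.single 2 2 1, by
    show _ ∈ LinearMap.ker (Matrix.traceLinearMap (Fin 3) ℂ ℂ)
    simp⟩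

/-!
Only the brackets among `E₁₂, E₂₃, E₁₃, E₃₂, H₁, H₂` enter, and these are preserved by
`UniversalEnvelopingAlgebra.ι`, so it suffices to prove the identity for any six elements of an
associative ring satisfying them. There every product is moved into the order
`E₁₂ < E₂₃ < E₁₃ < E₃₂ < H₁ < H₂` by `y x = x y + ⁅y, x⁆`; both sides of the identity then become
the same combination of ordered monomials.
-/

structure Sl3Relations {L : Type*} [LieRing L] (e₁₂ e₂₃ e₁₃ e₃₂ h₁ h₂ : L) : Prop where
  lie_e₂₃_e₁₂ : ⁅e₂₃, e₁₂⁆ = -e₁₃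
  lie_e₁₃_e₁₂ : ⁅e₁₃, e₁₂⁆ = 0
  lie_e₁₃_e₂₃ : ⁅e₁₃, e₂₃⁆ = 0
  lie_e₃₂_e₁₂ : ⁅e₃₂, e₁₂⁆ = 0
  lie_e₃₂_e₂₃ : ⁅e₃₂, e₂₃⁆ = -h₂
  lie_e₃₂_e₁₃ : ⁅e₃₂, e₁₃⁆ = -e₁₂
  lie_h₁_e₁₂ : ⁅h₁, e₁₂⁆ = 2 • e₁₂
  lie_h₁_e₂₃ : ⁅h₁, e₂₃⁆ = -e₂₃
  lie_h₁_e₁₃ : ⁅h₁, e₁₃⁆ = e₁₃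
  lie_h₁_e₃₂ : ⁅h₁, e₃₂⁆ = e₃₂
  lie_h₂_e₁₂ : ⁅h₂, e₁₂⁆ = -e₁₂
  lie_h₂_e₂₃ : ⁅h₂, e₂₃⁆ = 2 • e₂₃
  lie_h₂_e₁₃ : ⁅h₂, e₁₃⁆ = e₁₃
  lie_h₂_e₃₂ : ⁅h₂, e₃₂⁆ = -(2 • e₃₂)
  lie_h₂_h₁ : ⁅h₂, h₁⁆ = 0

theorem Sl3Relations.map {R L L' : Type*} [CommRing R] [LieRing L] [LieAlgebra R L] [LieRing L']
    [LieAlgebra R L'] {e₁₂ e₂₃ e₁₃ e₃₂ h₁ h₂ : L} (h : Sl3Relations e₁₂ e₂₃ e₁₃ e₃₂ h₁ h₂)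
    (f : L →ₗ⁅R⁆ L') : Sl3Relations (f e₁₂) (f e₂₃) (f e₁₃) (f e₃₂) (f h₁) (f h₂) := by
  cases h
  constructor <;> simp only [← LieHom.map_lie, *, map_neg, map_nsmul, map_zero]

theorem sl3Relations_slE : Sl3Relations slE₁₂ slE₂₃ slE₁₃ slE₃₂ slH₁ slH₂ := by
  constructor <;> ext1 <;>
    simp [slE₁₂, slE₂₃, slE₁₃, slE₃₂, slH₁, slH₂, val_single, Ring.lie_def, two_nsmul,
      sub_eq_add_neg, add_mul, mul_add, neg_mul, mul_neg, Matrix.single_mul_single_same,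
      Matrix.single_mul_single_of_ne]

section NormalOrdering

variable {A : Type*} [Ring A]

theorem reorder_mul_of_lie_eq {x y w : A} (h : ⁅y, x⁆ = w) :
    y * x = x * y + w ∧ ∀ t, y * (x * t) = x * (y * t) + w * t := by
  have hyx : y * x = x * y + w := by rw [← h, Ring.lie_def, add_sub_cancel]
  exact ⟨hyx, fun t ↦ by rw [← mul_assoc, hyx, add_mul, mul_assoc]⟩

theorem Sl3Relations.commutator_B₂_C₁ {e₁₂ e₂₃ e₁₃ e₃₂ h₁ h₂ : A}
    (h : Sl3Relations e₁₂ e₂₃ e₁₃ e₃₂ h₁ h₂) :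
    let B₂ := 3 * (e₁₂ * e₂₃) + (h₁ - h₂) * e₁₃
    let C₁ := e₃₂ * (e₁₃ * e₁₃) - e₂₃ * (e₁₂ * e₁₂) + h₂ * (e₁₂ * e₁₃)
    B₂ * C₁ - C₁ * B₂ = 3 * (e₁₃ * C₁) := by
  intro B₂ C₁
  simp only [B₂, C₁, ← Nat.ofNat_nsmul_eq_mul, two_nsmul, smul_mul_assoc, mul_smul_comm, smul_add,
    smul_neg, sub_eq_add_neg, mul_add, add_mul, mul_neg, neg_mul, neg_neg, neg_add, mul_assoc,
    zero_mul, add_zero,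
    reorder_mul_of_lie_eq h.lie_e₂₃_e₁₂, reorder_mul_of_lie_eq h.lie_e₁₃_e₁₂,
    reorder_mul_of_lie_eq h.lie_e₁₃_e₂₃, reorder_mul_of_lie_eq h.lie_e₃₂_e₁₂,
    reorder_mul_of_lie_eq h.lie_e₃₂_e₂₃, reorder_mul_of_lie_eq h.lie_e₃₂_e₁₃,
    reorder_mul_of_lie_eq h.lie_h₁_e₁₂, reorder_mul_of_lie_eq h.lie_h₁_e₂₃,
    reorder_mul_of_lie_eq h.lie_h₁_e₁₃, reorder_mul_of_lie_eq h.lie_h₁_e₃₂,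
    reorder_mul_of_lie_eq h.lie_h₂_e₁₂, reorder_mul_of_lie_eq h.lie_h₂_e₂₃,
    reorder_mul_of_lie_eq h.lie_h₂_e₁₃, reorder_mul_of_lie_eq h.lie_h₂_e₃₂,
    reorder_mul_of_lie_eq h.lie_h₂_h₁]
  abel

end NormalOrdering

/-- In the universal enveloping algebra of sl(3,ℂ), with `B₁ = E₁₃`,
`B₂ = 3E₁₂E₂₃ + (H₁−H₂)E₁₃` and `C₁ = E₃₂E₁₃² − E₂₃E₁₂² + H₂E₁₂E₁₃`,
we have `[B₂, C₁] = 3 B₁ C₁`. -/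
theorem B2_C1_commutator :
    let ι : sl (Fin 3) ℂ →ₗ⁅ℂ⁆ UniversalEnvelopingAlgebra ℂ (sl (Fin 3) ℂ) :=
      UniversalEnvelopingAlgebra.ι ℂ
    let B₁ := ι slE₁₃
    let B₂ := 3 * (ι slE₁₂ * ι slE₂₃) + (ι slH₁ - ι slH₂) * ι slE₁₃
    let C₁ := ι slE₃₂ * (ι slE₁₃ * ι slE₁₃) - ι slE₂₃ * (ι slE₁₂ * ι slE₁₂) +
      ι slH₂ * (ι slE₁₂ * ι slE₁₃)
    B₂ * C₁ - C₁ * B₂ = 3 * (B₁ * C₁) :=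
  (sl3Relations_slE.map (UniversalEnvelopingAlgebra.ι ℂ)).commutator_B₂_C₁
end
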